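/- Let a ∈ ℝ^K be a random vector with covariance Σ = E[a a^T] and suppose E[(a^T u)⁴] ≤ C₁ (u^T Σ u)² for all unit u and E[‖a‖⁴] ≤ C₂ (tr Σ)². Set X := a a^T − Σ. Then for every unit u, u^T E[X²] u ≤ √(C₁ C₂) · (tr Σ) · (u^T Σ u); i.e. E[X²] ⪯ √(C₁ C₂) (tr Σ) Σ in the Loewner order. -/

import Mathlib

open Matrix MeasureTheory ProbabilityTheory

/-!
Write `s = aᵀu`. Since `X` is symmetric, `uᵀ X² u = ‖X u‖²`, and `X u = s a - Σ u` where
`Σ u = E[s a]`; hence `uᵀ E[X²] u = ∑ₗ Var(s aₗ) ≤ E[s² ‖a‖²]`. Cauchy–Schwarz bounds the last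
expectation by `(E s⁴)^{1/2} (E ‖a‖⁴)^{1/2} ≤ √(C₁ C₂) (uᵀ Σ u) (tr Σ)`.
-/

instance : ENNReal.HolderTriple 4 4 2 := ⟨by
  rw [show (4 : ENNReal) = 2 * 2 by norm_num, ENNReal.mul_inv (by simp) (by simp), ← two_mul,
    ← mul_assoc, ENNReal.mul_inv_cancel (by simp) (by simp), one_mul]⟩

section Lp

variable {Ω : Type*} [MeasurableSpace Ω] {μ : Measure Ω}

lemma memLp_four_of_integrable_pow_four {f : Ω → ℝ} (hf : AEStronglyMeasurable f μ)
    (h : Integrable (fun ω => f ω ^ 4) μ) : MemLp f 4 μ := by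
  refine (integrable_norm_rpow_iff hf (by norm_num) (by norm_num)).1
    (h.congr (ae_of_all _ fun ω => ?_))
  dsimp only
  rw [ENNReal.toReal_ofNat, Real.rpow_ofNat, Real.norm_eq_abs, Even.pow_abs ⟨2, rfl⟩]

lemma memLp_two_sq_of_memLp_four {f : Ω → ℝ} (hf : MemLp f 4 μ) :
    MemLp (fun ω => f ω ^ 2) 2 μ := by
  simpa only [sq] using hf.mul' hf

lemma integral_mul_le_sqrt_mul_sqrt {f g : Ω → ℝ} (hf : 0 ≤ᵐ[μ] f) (hg : 0 ≤ᵐ[μ] g)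
    (hf₂ : MemLp f 2 μ) (hg₂ : MemLp g 2 μ) :
    ∫ ω, f ω * g ω ∂μ ≤ √(∫ ω, f ω ^ 2 ∂μ) * √(∫ ω, g ω ^ 2 ∂μ) := by
  have := integral_mul_le_Lp_mul_Lq_of_nonneg Real.HolderConjugate.two_two hf hg
    (by rwa [ENNReal.ofReal_ofNat]) (by rwa [ENNReal.ofReal_ofNat])
  simpa only [Real.rpow_ofNat, Real.sqrt_eq_rpow] using this

end Lp

section MatrixAlgebra

variable {ι : Type*}

lemma isSymm_vecMulVec_self (b : ι → ℝ) : (vecMulVec b b).IsSymm :=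
  transpose_vecMulVec b b

variable [Fintype ι]

lemma dotProduct_mul_self_mulVec_of_isSymm {X : Matrix ι ι ℝ} (hX : X.IsSymm) (u : ι → ℝ) :
    u ⬝ᵥ (X * X) *ᵥ u = ∑ l, (X *ᵥ u) l ^ 2 := by
  rw [← mulVec_mulVec, dotProduct_mulVec, ← mulVec_transpose, hX.eq]
  simp only [dotProduct, sq]

lemma vecMulVec_sub_mulVec (b u : ι → ℝ) (S : Matrix ι ι ℝ) :
    (vecMulVec b b - S) *ᵥ u = fun l => b l * (b ⬝ᵥ u) - (S *ᵥ u) l := by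
  ext l
  simp [sub_mulVec, vecMulVec_mulVec, mul_comm]

end MatrixAlgebra

section IntegralMatrix

variable {Ω ι : Type*} [MeasurableSpace Ω] {μ : Measure Ω} [Fintype ι]

lemma dotProduct_integral {f : Ω → ι → ℝ} (hf : ∀ i, Integrable (fun ω => f ω i) μ)
    (v : ι → ℝ) : v ⬝ᵥ (fun i => ∫ ω, f ω i ∂μ) = ∫ ω, v ⬝ᵥ f ω ∂μ := by
  simp only [dotProduct, ← integral_const_mul]
  exact (integral_finsetSum _ fun i _ => (hf i).const_mul (v i)).symm

lemma mulVec_of_integral {M : Ω → Matrix ι ι ℝ} (hM : ∀ i j, Integrable (fun ω => M ω i j) μ)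
    (w : ι → ℝ) : (of fun i j => ∫ ω, M ω i j ∂μ) *ᵥ w = fun i => ∫ ω, (M ω *ᵥ w) i ∂μ := by
  ext i
  change (fun j => ∫ ω, M ω i j ∂μ) ⬝ᵥ w = ∫ ω, M ω i ⬝ᵥ w ∂μ
  simp only [dotProduct_comm _ w, dotProduct_integral (hM i)]

lemma integrable_mulVec_apply {M : Ω → Matrix ι ι ℝ}
    (hM : ∀ i j, Integrable (fun ω => M ω i j) μ) (w : ι → ℝ) (i : ι) :
    Integrable (fun ω => (M ω *ᵥ w) i) μ :=
  integrable_finsetSum _ fun j _ => (hM i j).mul_const (w j)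

lemma dotProduct_of_integral_mulVec {M : Ω → Matrix ι ι ℝ}
    (hM : ∀ i j, Integrable (fun ω => M ω i j) μ) (v w : ι → ℝ) :
    v ⬝ᵥ (of fun i j => ∫ ω, M ω i j ∂μ) *ᵥ w = ∫ ω, v ⬝ᵥ M ω *ᵥ w ∂μ := by
  rw [mulVec_of_integral hM, dotProduct_integral (integrable_mulVec_apply hM w)]

end IntegralMatrix

section SecondMoment

variable {Ω ι : Type*} [MeasurableSpace Ω] {μ : Measure Ω}

noncomputable def secondMomentMatrix (μ : Measure Ω) (a : Ω → ι → ℝ) : Matrix ι ι ℝ :=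
  of fun i j => ∫ ω, a ω i * a ω j ∂μ

lemma secondMomentMatrix_isSymm (a : Ω → ι → ℝ) : (secondMomentMatrix μ a).IsSymm := by
  ext i j
  simp only [secondMomentMatrix, transpose_apply, of_apply, mul_comm]

lemma integrable_vecMulVec_apply [IsFiniteMeasure μ] {a : Ω → ι → ℝ}
    (ha : ∀ i, MemLp (fun ω => a ω i) 4 μ) (i j : ι) :
    Integrable (fun ω => vecMulVec (a ω) (a ω) i j) μ :=
  ((ha j).mul' (ha i)).integrable one_le_two

variable [Fintype ι]

lemma trace_secondMomentMatrix_nonneg (a : Ω → ι → ℝ) : 0 ≤ (secondMomentMatrix μ a).trace :=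
  Finset.sum_nonneg fun i _ => integral_nonneg fun ω => mul_self_nonneg (a ω i)

lemma memLp_dotProduct {a : Ω → ι → ℝ} (ha : ∀ i, MemLp (fun ω => a ω i) 4 μ) (u : ι → ℝ) :
    MemLp (fun ω => a ω ⬝ᵥ u) 4 μ :=
  memLp_finsetSum _ fun i _ => (ha i).mul_const (u i)

lemma secondMomentMatrix_mulVec [IsFiniteMeasure μ] {a : Ω → ι → ℝ}
    (ha : ∀ i, MemLp (fun ω => a ω i) 4 μ) (u : ι → ℝ) :
    secondMomentMatrix μ a *ᵥ u = fun l => ∫ ω, a ω l * (a ω ⬝ᵥ u) ∂μ := by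
  refine (mulVec_of_integral (integrable_vecMulVec_apply ha) u).trans
    (funext fun l => integral_congr_ae (ae_of_all _ fun ω => ?_))
  simp [vecMulVec_mulVec]

lemma dotProduct_secondMomentMatrix_mulVec [IsFiniteMeasure μ] {a : Ω → ι → ℝ}
    (ha : ∀ i, MemLp (fun ω => a ω i) 4 μ) (u : ι → ℝ) :
    u ⬝ᵥ secondMomentMatrix μ a *ᵥ u = ∫ ω, (a ω ⬝ᵥ u) ^ 2 ∂μ := by
  refine (dotProduct_of_integral_mulVec (integrable_vecMulVec_apply ha) u u).trans
    (integral_congr_ae (ae_of_all _ fun ω => ?_))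
  simp [vecMulVec_mulVec, dotProduct_comm u, sq]

lemma dotProduct_of_integral_sq_sub_secondMomentMatrix_le [IsProbabilityMeasure μ]
    {a : Ω → ι → ℝ} (ha : ∀ i, MemLp (fun ω => a ω i) 4 μ) (u : ι → ℝ) :
    u ⬝ᵥ (of fun i j => ∫ ω, ((vecMulVec (a ω) (a ω) - secondMomentMatrix μ a) *
      (vecMulVec (a ω) (a ω) - secondMomentMatrix μ a)) i j ∂μ) *ᵥ u
      ≤ ∫ ω, (a ω ⬝ᵥ u) ^ 2 * ∑ l, a ω l ^ 2 ∂μ := by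
  set Sig := secondMomentMatrix μ a
  have hX (i j : ι) : MemLp (fun ω => (vecMulVec (a ω) (a ω) - Sig) i j) 2 μ :=
    ((ha j).mul' (ha i)).sub (memLp_const (Sig i j))
  have hXX (i j : ι) : Integrable
      (fun ω => ((vecMulVec (a ω) (a ω) - Sig) * (vecMulVec (a ω) (a ω) - Sig)) i j) μ :=
    integrable_finsetSum _ fun l _ => (hX i l).integrable_mul (hX l j)
  have hY (l : ι) : MemLp (fun ω => a ω l * (a ω ⬝ᵥ u)) 2 μ :=
    (memLp_dotProduct ha u).mul' (ha l)
  have hYc (l : ι) : Integrable (fun ω => (a ω l * (a ω ⬝ᵥ u) - (Sig *ᵥ u) l) ^ 2) μ :=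
    ((hY l).sub (memLp_const _)).integrable_sq
  calc _ = ∫ ω, ∑ l, (a ω l * (a ω ⬝ᵥ u) - (Sig *ᵥ u) l) ^ 2 ∂μ := by
        rw [dotProduct_of_integral_mulVec hXX]
        refine integral_congr_ae (ae_of_all _ fun ω => ?_)
        dsimp only
        rw [dotProduct_mul_self_mulVec_of_isSymm
          ((isSymm_vecMulVec_self (a ω)).sub (secondMomentMatrix_isSymm (μ := μ) a)),
          vecMulVec_sub_mulVec]
    _ = ∑ l, Var[fun ω => a ω l * (a ω ⬝ᵥ u); μ] := by
        rw [integral_finsetSum _ fun l _ => hYc l]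
        refine Finset.sum_congr rfl fun l _ => ?_
        rw [variance_eq_integral (hY l).aestronglyMeasurable.aemeasurable,
          secondMomentMatrix_mulVec ha]
    _ ≤ ∑ l, ∫ ω, (a ω l * (a ω ⬝ᵥ u)) ^ 2 ∂μ :=
        Finset.sum_le_sum fun l _ => variance_le_expectation_sq (hY l).aestronglyMeasurable
    _ = ∫ ω, (a ω ⬝ᵥ u) ^ 2 * ∑ l, a ω l ^ 2 ∂μ := by
        rw [← integral_finsetSum _ fun l _ => (hY l).integrable_sq]
        simp only [mul_pow, ← Finset.sum_mul, mul_comm]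

end SecondMoment

theorem variance_proxy_bound_general {Ω : Type*} [MeasurableSpace Ω] (μ : Measure Ω)
    [IsProbabilityMeasure μ] {K : ℕ} (a : Ω → Fin K → ℝ) (hmeas : Measurable a)
    (hint : ∀ i j k l : Fin K, Integrable (fun ω => a ω i * a ω j * a ω k * a ω l) μ)
    (Sig : Matrix (Fin K) (Fin K) ℝ)
    (hSig : ∀ i j, Sig i j = ∫ ω, a ω i * a ω j ∂μ)
    (C₁ C₂ : ℝ)
    (h4 : ∀ u : Fin K → ℝ, (∑ i, (u i) ^ 2 = 1) →
      ∫ ω, (∑ i, a ω i * u i) ^ 4 ∂μ ≤ C₁ * (u ⬝ᵥ Sig.mulVec u) ^ 2)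
    (hn4 : ∫ ω, (∑ i, (a ω i) ^ 2) ^ 2 ∂μ ≤ C₂ * Sig.trace ^ 2)
    (u : Fin K → ℝ) (hu : ∑ i, (u i) ^ 2 = 1) :
    u ⬝ᵥ (Matrix.of fun i j =>
        ∫ ω, ∑ l, (a ω i * a ω l - Sig i l) * (a ω l * a ω j - Sig l j) ∂μ).mulVec u
      ≤ Real.sqrt (C₁ * C₂) * Sig.trace * (u ⬝ᵥ Sig.mulVec u) := by
  have ha (i : Fin K) : MemLp (fun ω => a ω i) 4 μ :=
    memLp_four_of_integrable_pow_four ((measurable_pi_apply i).comp hmeas).aestronglyMeasurable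
      ((hint i i i i).congr (ae_of_all _ fun ω => by ring))
  obtain rfl : Sig = secondMomentMatrix μ a := Matrix.ext hSig
  have hq : 0 ≤ u ⬝ᵥ secondMomentMatrix μ a *ᵥ u :=
    (dotProduct_secondMomentMatrix_mulVec ha u).symm ▸ integral_nonneg fun ω => sq_nonneg _
  set q := u ⬝ᵥ secondMomentMatrix μ a *ᵥ u
  set t := (secondMomentMatrix μ a).trace
  have hC₁q : 0 ≤ C₁ * q ^ 2 := (integral_nonneg fun ω => by positivity).trans (h4 u hu)
  calc _ ≤ ∫ ω, (a ω ⬝ᵥ u) ^ 2 * ∑ l, a ω l ^ 2 ∂μ :=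
        dotProduct_of_integral_sq_sub_secondMomentMatrix_le ha u
    _ ≤ √(∫ ω, ((a ω ⬝ᵥ u) ^ 2) ^ 2 ∂μ) * √(∫ ω, (∑ l, a ω l ^ 2) ^ 2 ∂μ) :=
        integral_mul_le_sqrt_mul_sqrt (ae_of_all _ fun ω => sq_nonneg _)
          (ae_of_all _ fun ω => by positivity)
          (memLp_two_sq_of_memLp_four (memLp_dotProduct ha u))
          (memLp_finsetSum _ fun l _ => memLp_two_sq_of_memLp_four (ha l))
    _ ≤ √(C₁ * q ^ 2) * √(C₂ * t ^ 2) := by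
        simp only [← pow_mul, Nat.reduceMul]
        gcongr
        exact h4 u hu
    _ = √(C₁ * C₂) * t * q := by
        rw [← Real.sqrt_mul hC₁q, show C₁ * q ^ 2 * (C₂ * t ^ 2) = C₁ * C₂ * (t * q) ^ 2 by ring,
          Real.sqrt_mul' _ (sq_nonneg _),
          Real.sqrt_sq (mul_nonneg (trace_secondMomentMatrix_nonneg a) hq), mul_assoc]

/-- Variance proxy bound: let `a` be a random vector with covariance
`Σ = E[a aᵀ]`, `E[(aᵀu)⁴] ≤ C₁ (uᵀΣu)²` for all unit `u`, and
`E[‖a‖⁴] ≤ C₂ (tr Σ)²`. With `X = a aᵀ − Σ`, for every unit `u`,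
`uᵀ E[X²] u ≤ √(C₁ C₂) (tr Σ) (uᵀ Σ u)`. -/
theorem variance_proxy_bound {Ω : Type*} [MeasurableSpace Ω] (μ : Measure Ω)
    [IsProbabilityMeasure μ] {K : ℕ} (a : Ω → Fin K → ℝ) (hmeas : Measurable a)
    (hint : ∀ i j k l : Fin K, Integrable (fun ω => a ω i * a ω j * a ω k * a ω l) μ)
    (Sig : Matrix (Fin K) (Fin K) ℝ)
    (hSig : ∀ i j, Sig i j = ∫ ω, a ω i * a ω j ∂μ)
    (C₁ C₂ : ℝ) (hC₁ : 0 ≤ C₁) (hC₂ : 0 ≤ C₂)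
    (h4 : ∀ u : Fin K → ℝ, (∑ i, (u i) ^ 2 = 1) →
      ∫ ω, (∑ i, a ω i * u i) ^ 4 ∂μ ≤ C₁ * (u ⬝ᵥ Sig.mulVec u) ^ 2)
    (hn4 : ∫ ω, (∑ i, (a ω i) ^ 2) ^ 2 ∂μ ≤ C₂ * Sig.trace ^ 2)
    (u : Fin K → ℝ) (hu : ∑ i, (u i) ^ 2 = 1) :
    u ⬝ᵥ (Matrix.of fun i j =>
        ∫ ω, ∑ l, (a ω i * a ω l - Sig i l) * (a ω l * a ω j - Sig l j) ∂μ).mulVec u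
      ≤ Real.sqrt (C₁ * C₂) * Sig.trace * (u ⬝ᵥ Sig.mulVec u) :=
  variance_proxy_bound_general μ a hmeas hint Sig hSig C₁ C₂ h4 hn4 u hu
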